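/- arXiv:math/0503298 — 2 statements merged into one kernel-verified Lean document; each statement's English description precedes it below -/
import Mathlib

section
/- Let ε > 0, ω ≠ 0, σ > 0, and let c > 0 be such that ||z₁|^{2σ}z₁ − |z₂|^{2σ}z₂| ≤ c(|z₁|^{2σ} + |z₂|^{2σ})|z₁ − z₂| for all z₁, z₂ ∈ ℂ. Let R > 0 and let z, ξ ∈ ℓ² satisfy ‖z‖_{ℓ²} ≤ R and ‖ξ‖_{ℓ²} ≤ R. If φ, ψ ∈ ℓ² satisfy −(1/ε)(φ_{n−1} − 2φ_n + φ_{n+1}) + ω²φ_n = |z_n|^{2σ}z_n and −(1/ε)(ψ_{n−1} − 2ψ_n + ψ_{n+1}) + ω²ψ_n = |ξ_n|^{2σ}ξ_n for all n ∈ ℤ, then ‖φ − ψ‖²_{ℓ²} ≤ (4c²/ω⁴) R^{4σ} ‖z − ξ‖²_{ℓ²}. -/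
open scoped ENNReal

/-! Shifts are isometries of `ℓ²(ℤ)`, so Cauchy–Schwarz gives `Re ⟪u, -Δu⟫ ≥ 0` for the discrete
Laplacian, whence `ω² ‖u‖² ≤ Re ⟪u, Au⟫ ≤ ‖u‖ ‖Au‖` for `A = -(1/ε) Δ + ω²`, i.e. `ω² ‖u‖ ≤ ‖Au‖`.
For `u = φ - ψ`, `Au` is the difference of the nonlinearities, which the hypothesis on `c`
together with `|z n|, |ξ n| ≤ R` bounds pointwise by `2 c R^{2σ} |z n - ξ n|`. -/

theorem Memℓp.comp_equiv {α β E : Type*} [NormedAddCommGroup E] {p : ℝ≥0∞} {f : α → E}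
    (hf : Memℓp f p) (e : β ≃ α) : Memℓp (f ∘ e) p := by
  obtain rfl | rfl | hp := p.trichotomy
  · rw [memℓp_zero_iff] at hf ⊢
    exact hf.preimage e.injective.injOn
  · rw [memℓp_infty_iff] at hf ⊢
    exact hf.mono (Set.range_comp_subset_range e fun a => ‖f a‖)
  · rw [memℓp_gen_iff hp] at hf ⊢
    exact e.summable_iff.2 hf

namespace lp

variable {α β E : Type*} [NormedAddCommGroup E] {p : ℝ≥0∞}

def compEquiv (e : β ≃ α) (u : lp (fun _ : α => E) p) : lp (fun _ : β => E) p :=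
  ⟨u ∘ e, (lp.memℓp u).comp_equiv e⟩

@[simp]
theorem compEquiv_apply (e : β ≃ α) (u : lp (fun _ : α => E) p) (i : β) :
    compEquiv e u i = u (e i) :=
  rfl

theorem norm_compEquiv (hp : 0 < p.toReal) (e : β ≃ α) (u : lp (fun _ : α => E) p) :
    ‖compEquiv e u‖ = ‖u‖ := by
  rw [norm_eq_tsum_rpow hp, norm_eq_tsum_rpow hp]
  congr 1
  exact e.tsum_eq fun i => ‖u i‖ ^ p.toReal

theorem exists_coe_eq_and_norm_le [NormedSpace ℝ E] [Fact (1 ≤ p)] {M : ℝ} (hM : 0 ≤ M)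
    (f : α → E) (w : lp (fun _ : α => E) p) (hfw : ∀ i, ‖f i‖ ≤ M * ‖w i‖) :
    ∃ v : lp (fun _ : α => E) p, ⇑v = f ∧ ‖v‖ ≤ M * ‖w‖ := by
  have hfMw : ∀ i, ‖f i‖ ≤ ‖(M • w) i‖ := fun i => by
    simpa [norm_smul, abs_of_nonneg hM] using hfw i
  refine ⟨⟨f, (lp.memℓp (M • w)).mono' hfMw⟩, rfl, ?_⟩
  calc ‖(⟨f, _⟩ : lp (fun _ : α => E) p)‖ ≤ ‖M • w‖ :=
        norm_mono (zero_lt_one.trans_le Fact.out).ne' hfMw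
    _ = M * ‖w‖ := by rw [norm_smul, Real.norm_of_nonneg hM]

end lp

def discreteLaplacian {R : Type*} [Ring R] (u : ℤ → R) (n : ℤ) : R :=
  u (n - 1) - 2 * u n + u (n + 1)

open RCLike in
theorem lp.mul_norm_le_norm_of_neg_laplacian_add_eq {𝕜 : Type*} [RCLike 𝕜] {a b : ℝ}
    (ha : 0 ≤ a) (u f : lp (fun _ : ℤ => 𝕜) 2)
    (h : ∀ n, -(a : 𝕜) * discreteLaplacian u n + (b : 𝕜) * u n = f n) :
    b * ‖u‖ ≤ ‖f‖ := by
  set Tu := lp.compEquiv (Equiv.subRight 1) u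
  set Su := lp.compEquiv (Equiv.addRight 1) u
  have hf : f = -(a : 𝕜) • (Tu - (2 : 𝕜) • u + Su) + (b : 𝕜) • u := by
    ext n
    simp only [lp.coeFn_add, lp.coeFn_sub, lp.coeFn_smul, Pi.add_apply, Pi.sub_apply,
      Pi.smul_apply, smul_eq_mul, lp.compEquiv_apply, Equiv.subRight_apply, Equiv.coe_addRight,
      Tu, Su, ← h n, discreteLaplacian]
  have hshift : ∀ e : ℤ ≃ ℤ, re (inner 𝕜 u (lp.compEquiv e u)) ≤ ‖u‖ ^ 2 := fun e =>
    (re_inner_le_norm _ _).trans_eq (by rw [lp.norm_compEquiv (by norm_num), sq])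
  have hre : re (inner 𝕜 u f) = -a * (re (inner 𝕜 u Tu) - 2 * ‖u‖ ^ 2 + re (inner 𝕜 u Su))
      + b * ‖u‖ ^ 2 := by
    rw [hf]
    simp only [inner_add_right, inner_sub_right, inner_smul_right, inner_self_eq_norm_sq_to_K,
      map_add, map_sub, map_neg, neg_mul, re_ofReal_mul, ofNat_mul_re, ← ofReal_pow, ofReal_re]
  have hcoer : b * ‖u‖ ^ 2 ≤ ‖u‖ * ‖f‖ := by
    nlinarith [hshift (Equiv.subRight 1), hshift (Equiv.addRight 1),
      re_inner_le_norm (𝕜 := 𝕜) u f]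
  rcases (norm_nonneg u).eq_or_lt with hu | hu
  · rw [← hu, mul_zero]
    exact norm_nonneg f
  · nlinarith

/-- Contraction estimate for the solution map of the auxiliary linear
problem: if `A_ω φ = |z|^(2σ) z` and `A_ω ψ = |ξ|^(2σ) ξ` with `‖z‖, ‖ξ‖ ≤ R`, then
`‖φ − ψ‖² ≤ (4c²/ω⁴) R^(4σ) ‖z − ξ‖²`. -/
theorem stmt_12 (ε ω σ c R : ℝ) (hε : 0 < ε) (hω : ω ≠ 0) (hσ : 0 < σ) (hc : 0 < c)
    (hlip : ∀ z₁ z₂ : ℂ,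
      ‖(‖z₁‖ ^ (2*σ) : ℝ) * z₁ - (‖z₂‖ ^ (2*σ) : ℝ) * z₂‖
        ≤ c * (‖z₁‖ ^ (2*σ) + ‖z₂‖ ^ (2*σ)) * ‖z₁ - z₂‖)
    (hR : 0 < R)
    (z ξ φ ψ : lp (fun _ : ℤ => ℂ) 2)
    (hz : ‖z‖ ≤ R) (hξ : ‖ξ‖ ≤ R)
    (hφ : ∀ n : ℤ,
      -(1/ε : ℂ) * (φ (n-1) - 2 * φ n + φ (n+1)) + (ω^2 : ℝ) * φ n
        = (‖z n‖ ^ (2*σ) : ℝ) * z n)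
    (hψ : ∀ n : ℤ,
      -(1/ε : ℂ) * (ψ (n-1) - 2 * ψ n + ψ (n+1)) + (ω^2 : ℝ) * ψ n
        = (‖ξ n‖ ^ (2*σ) : ℝ) * ξ n) :
    ‖φ - ψ‖^2 ≤ (4 * c^2 / ω^4) * R ^ (4*σ) * ‖z - ξ‖^2 := by
  set M := 2 * c * R ^ (2 * σ)
  have hpow_le : ∀ w : lp (fun _ : ℤ => ℂ) 2, ‖w‖ ≤ R → ∀ n, ‖w n‖ ^ (2 * σ) ≤ R ^ (2 * σ) :=
    fun w hw n => by
      gcongr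
      exact (lp.norm_apply_le_norm two_ne_zero w n).trans hw
  have hdiff : ∀ n, ‖(‖z n‖ ^ (2*σ) : ℝ) * z n - (‖ξ n‖ ^ (2*σ) : ℝ) * ξ n‖
      ≤ M * ‖(z - ξ) n‖ := fun n =>
    calc _ ≤ c * (‖z n‖ ^ (2*σ) + ‖ξ n‖ ^ (2*σ)) * ‖z n - ξ n‖ := hlip (z n) (ξ n)
      _ ≤ c * (R ^ (2*σ) + R ^ (2*σ)) * ‖z n - ξ n‖ := by
        gcongr c * (?_ + ?_) * _
        exacts [hpow_le z hz n, hpow_le ξ hξ n]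
      _ = M * ‖(z - ξ) n‖ := by simp only [lp.coeFn_sub, Pi.sub_apply, M]; ring
  obtain ⟨f, hf, hf_norm⟩ := lp.exists_coe_eq_and_norm_le (by positivity) _ (z - ξ) hdiff
  have hφψ : ∀ n, -((1 / ε : ℝ) : ℂ) * discreteLaplacian (φ - ψ) n
      + ((ω ^ 2 : ℝ) : ℂ) * (φ - ψ) n = f n := fun n => by
    simp only [hf, discreteLaplacian, lp.coeFn_sub, Pi.sub_apply, Complex.ofReal_div,
      Complex.ofReal_one]
    linear_combination hφ n - hψ n
  have hkey : ω ^ 2 * ‖φ - ψ‖ ≤ M * ‖z - ξ‖ :=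
    (lp.mul_norm_le_norm_of_neg_laplacian_add_eq (one_div_pos.2 hε).le _ f hφψ).trans hf_norm
  have hR4 : R ^ (4 * σ) = (R ^ (2 * σ)) ^ 2 := by
    rw [← Real.rpow_natCast, ← Real.rpow_mul hR.le]
    ring_nf
  rw [div_mul_eq_mul_div, div_mul_eq_mul_div, le_div_iff₀ (by positivity), hR4]
  nlinarith [pow_le_pow_left₀ (by positivity) hkey 2]
end

section
/- Let ε > 0, ω ≠ 0, σ > 0, and let c > 0 be such that ||z₁|^{2σ}z₁ − |z₂|^{2σ}z₂| ≤ c(|z₁|^{2σ} + |z₂|^{2σ})|z₁ − z₂| for all z₁, z₂ ∈ ℂ. If φ ∈ ℓ² satisfies the standing wave equations −(1/ε)(φ_{n−1} − 2φ_n + φ_{n+1}) + ω²φ_n = |φ_n|^{2σ}φ_n for all n ∈ ℤ and ‖φ‖_{ℓ²} < (ω⁴/(4c²))^{1/(4σ)}, then φ = 0; that is, there exist no nontrivial standing waves of ℓ²-norm less than the critical value E_c(ω,σ) = (ω⁴/(4c²))^{1/(4σ)}. -/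
/-!
Multiplying the equation by `conj (φ n)` and summing over `n` gives
`ω² ‖φ‖² + ε⁻¹ ∑ |φ (n+1) - φ n|² = ∑ |φ n|^(2σ+2) ≤ ‖φ‖^(2σ) ‖φ‖²`, hence `ω² ≤ ‖φ‖^(2σ)` when
`φ ≠ 0`. The bound on the nonlinearity at `z₁ = 1`, `z₂ = 0` forces `c ≥ 1`, while the smallness
assumption says `‖φ‖^(2σ) < ω² / (2c) ≤ ω²`.
-/

open ComplexConjugate

theorem lp.hasSum_norm_sq {ι : Type*} {E : ι → Type*} [∀ i, NormedAddCommGroup (E i)]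
    (f : lp E 2) : HasSum (fun i => ‖f i‖ ^ 2) (‖f‖ ^ 2) := by
  simpa using lp.hasSum_norm (p := 2) (by norm_num) f

theorem abs_re_mul_conj_le (z w : ℂ) : |(z * conj w).re| ≤ (‖z‖ ^ 2 + ‖w‖ ^ 2) / 2 := by
  calc |(z * conj w).re| ≤ ‖z * conj w‖ := Complex.abs_re_le_norm _
    _ = ‖z‖ * ‖w‖ := by rw [norm_mul, Complex.norm_conj]
    _ ≤ (‖z‖ ^ 2 + ‖w‖ ^ 2) / 2 := by nlinarith [sq_nonneg (‖z‖ - ‖w‖)]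

section Equiv
variable {ι : Type*} (e : ι ≃ ι) {f : ι → ℂ}

theorem hasSum_norm_sq_add_norm_sq_comp_equiv {N : ℝ} (hf : HasSum (fun i => ‖f i‖ ^ 2) N) :
    HasSum (fun i => (‖f (e i)‖ ^ 2 + ‖f i‖ ^ 2) / 2) N := by
  simpa using ((e.hasSum_iff.mpr hf).add hf).div_const 2

theorem summable_re_mul_conj_comp_equiv (hf : Summable fun i => ‖f i‖ ^ 2) :
    Summable fun i => (f (e i) * conj (f i)).re :=
  .of_norm_bounded (hasSum_norm_sq_add_norm_sq_comp_equiv e hf.hasSum).summable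
    fun _ => (Real.norm_eq_abs _).trans_le (abs_re_mul_conj_le _ _)

theorem tsum_re_mul_conj_comp_equiv_le {N : ℝ} (hf : HasSum (fun i => ‖f i‖ ^ 2) N) :
    ∑' i, (f (e i) * conj (f i)).re ≤ N :=
  hasSum_le (fun _ => (le_abs_self _).trans (abs_re_mul_conj_le _ _))
    (summable_re_mul_conj_comp_equiv e hf.summable).hasSum
    (hasSum_norm_sq_add_norm_sq_comp_equiv e hf)

end Equiv

theorem mul_norm_sq_eq_of_discreteSchrodinger_eq {ε r s : ℝ} {u w x : ℂ}
    (h : -(1/ε : ℂ) * (w - 2 * u + x) + (r : ℂ) * u = (s : ℂ) * u) :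
    s * ‖u‖ ^ 2 = r * ‖u‖ ^ 2 + ε⁻¹ * (2 * ‖u‖ ^ 2 - ((w + x) * conj u).re) := by
  have key : ((s * ‖u‖ ^ 2 : ℝ) : ℂ)
      = r * ‖u‖ ^ 2 + ε⁻¹ * (2 * ‖u‖ ^ 2 - (w + x) * conj u) := by
    push_cast
    rw [← Complex.mul_conj']
    linear_combination (-conj u) * h
  simpa [← Complex.ofReal_pow, Complex.ofReal_inv] using congrArg Complex.re key

theorem mul_le_mul_of_discreteSchrodinger_eq {ε r M N : ℝ} (hε : 0 < ε) {f : ℤ → ℂ} {V : ℤ → ℝ}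
    (hf : HasSum (fun n => ‖f n‖ ^ 2) N) (hV : ∀ n, V n ≤ M)
    (heq : ∀ n, -(1/ε : ℂ) * (f (n-1) - 2 * f n + f (n+1)) + (r : ℂ) * f n = (V n : ℂ) * f n) :
    r * N ≤ M * N := by
  set g : ℤ → ℝ := fun n => ((f (n-1) + f (n+1)) * conj (f n)).re
  have hg_split : g = fun n => (f (Equiv.subRight 1 n) * conj (f n)).re
      + (f (Equiv.addRight 1 n) * conj (f n)).re := by
    ext n; simp [g, add_mul]
  have hg_summable : Summable g := hg_split ▸
    (summable_re_mul_conj_comp_equiv _ hf.summable).add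
      (summable_re_mul_conj_comp_equiv _ hf.summable)
  have hg_le : ∑' n, g n ≤ 2 * N := by
    rw [hg_split, (summable_re_mul_conj_comp_equiv _ hf.summable).tsum_add
      (summable_re_mul_conj_comp_equiv _ hf.summable)]
    linarith [tsum_re_mul_conj_comp_equiv_le (Equiv.subRight 1) hf,
      tsum_re_mul_conj_comp_equiv_le (Equiv.addRight 1) hf]
  have hsum : HasSum (fun n => V n * ‖f n‖ ^ 2) (r * N + ε⁻¹ * (2 * N - ∑' n, g n)) := by
    simp_rw [fun n => mul_norm_sq_eq_of_discreteSchrodinger_eq (heq n)]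
    exact (hf.mul_left r).add (((hf.mul_left 2).sub hg_summable.hasSum).mul_left ε⁻¹)
  have hupper : r * N + ε⁻¹ * (2 * N - ∑' n, g n) ≤ M * N :=
    hasSum_le (fun n => mul_le_mul_of_nonneg_right (hV n) (sq_nonneg _)) hsum (hf.mul_left M)
  have hkinetic : 0 ≤ ε⁻¹ * (2 * N - ∑' n, g n) :=
    mul_nonneg (inv_nonneg.mpr hε.le) (sub_nonneg.mpr hg_le)
  linarith

theorem stmt_13_general (ε ω σ c : ℝ) (hε : 0 < ε) (hσ : 0 < σ)
    (hlip : ∀ z₁ z₂ : ℂ,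
      ‖(‖z₁‖ ^ (2*σ) : ℝ) * z₁ - (‖z₂‖ ^ (2*σ) : ℝ) * z₂‖
        ≤ c * (‖z₁‖ ^ (2*σ) + ‖z₂‖ ^ (2*σ)) * ‖z₁ - z₂‖)
    (φ : lp (fun _ : ℤ => ℂ) 2)
    (hφ : ∀ n : ℤ,
      -(1/ε : ℂ) * (φ (n-1) - 2 * φ n + φ (n+1)) + (ω^2 : ℝ) * φ n
        = (‖φ n‖ ^ (2*σ) : ℝ) * φ n)
    (hsmall : ‖φ‖ < (ω^4 / (4 * c^2)) ^ (1 / (4*σ))) :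
    φ = 0 := by
  by_contra hne
  have hc : 1 ≤ c := by simpa [Real.zero_rpow (by positivity : 2 * σ ≠ 0)] using hlip 1 0
  have hω : ω ^ 2 ≤ ‖φ‖ ^ (2 * σ) := by
    refine le_of_mul_le_mul_right (mul_le_mul_of_discreteSchrodinger_eq hε (lp.hasSum_norm_sq φ)
      (fun n => ?_) hφ) (pow_pos (norm_pos_iff.mpr hne) 2)
    exact Real.rpow_le_rpow (norm_nonneg _) (lp.norm_apply_le_norm two_ne_zero φ n) (by positivity)
  have hcrit : ((ω ^ 4 / (4 * c ^ 2)) ^ (1 / (4 * σ))) ^ (2 * σ) = ω ^ 2 / (2 * c) := by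
    rw [← Real.rpow_mul (by positivity), show 1 / (4 * σ) * (2 * σ) = 1 / 2 by field_simp; ring,
      ← Real.sqrt_eq_rpow, show ω ^ 4 / (4 * c ^ 2) = (ω ^ 2 / (2 * c)) ^ 2 by ring,
      Real.sqrt_sq (by positivity)]
  have hlt : ‖φ‖ ^ (2 * σ) < ω ^ 2 / (2 * c) :=
    hcrit ▸ Real.rpow_lt_rpow (norm_nonneg _) hsmall (by positivity)
  have : ω ^ 2 / (2 * c) ≤ ω ^ 2 := div_le_self (sq_nonneg _) (by linarith)
  linarith

/-- Non-existence of nontrivial standing waves of small energy: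
any `φ ∈ ℓ²` solving `−(1/ε)(φₙ₋₁ − 2φₙ + φₙ₊₁) + ω²φₙ = |φₙ|^(2σ)φₙ` with
`‖φ‖ < (ω⁴/(4c²))^(1/(4σ))` is trivial. -/
theorem stmt_13 (ε ω σ c : ℝ) (hε : 0 < ε) (hω : ω ≠ 0) (hσ : 0 < σ) (hc : 0 < c)
    (hlip : ∀ z₁ z₂ : ℂ,
      ‖(‖z₁‖ ^ (2*σ) : ℝ) * z₁ - (‖z₂‖ ^ (2*σ) : ℝ) * z₂‖
        ≤ c * (‖z₁‖ ^ (2*σ) + ‖z₂‖ ^ (2*σ)) * ‖z₁ - z₂‖)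
    (φ : lp (fun _ : ℤ => ℂ) 2)
    (hφ : ∀ n : ℤ,
      -(1/ε : ℂ) * (φ (n-1) - 2 * φ n + φ (n+1)) + (ω^2 : ℝ) * φ n
        = (‖φ n‖ ^ (2*σ) : ℝ) * φ n)
    (hsmall : ‖φ‖ < (ω^4 / (4 * c^2)) ^ (1 / (4*σ))) :
    φ = 0 :=
  stmt_13_general ε ω σ c hε hσ hlip φ hφ hsmall
end
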